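/- There exists a constant c > 0, independent of η, such that for all η > 0 and t > 0, the quantity |I_a + I_b| ≤ c(1/η + 2)² e^{4ηt}, where I_a = ∫_{ξ<0} e^{2πixξ} ∂_ξ² Ŵ(t,ξ) dξ and I_b is the analogous integral over ξ > 0, with Ŵ(t,ξ) = e^{iξ³t − ηt(|ξ|³−|ξ|)}. In particular ‖∂_ξ² Ŵ(t,·)‖_{L¹((−∞,0))} ≤ c(1/η+2)² e^{4ηt}. -/

import Mathlib

open MeasureTheory

noncomputable def ostSymbol (η t ξ : ℝ) : ℂ :=
  Complex.exp (Complex.I * ((ξ ^ 3 * t : ℝ) : ℂ) - ((η * t * (|ξ| ^ 3 - |ξ|) : ℝ) : ℂ))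

noncomputable def ostKernel (η t x : ℝ) : ℂ :=
  ∫ ξ : ℝ, Complex.exp (2 * Real.pi * Complex.I * ((x * ξ : ℝ) : ℂ)) * ostSymbol η t ξ

/-!
On each half-line `±ξ > 0` the symbol is `exp (a ξ³ + b ξ)` with `a = i t ∓ η t`, `b = ± η t`,
so `∂²Ŵ = ((3 a ξ² + b)² + 6 a ξ) Ŵ`. Writing `s = η t` and using `t + s ≤ s (1/η + 2)` and
`r ≤ 1 + r³/2`, this is at most `(1/η + 2)² e^s (s² (3r² + 1)² + 6 s r) e^{-s r³/2}` with `r = |ξ|`.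
The moments `s^k ∫₀^∞ r^m e^{-s r³/2} dr = 2^q Γ(q) s^(k-q) / 3`, `q = (m+1)/3`, that occur
all have `0 ≤ k - q ≤ 3`, hence are `O(e^{3s})` uniformly in `s > 0`; the factor `e^{2πixξ}` has
modulus one.
-/

open Real Set

open Complex in
theorem hasDerivAt_cexp_cubic (a b : ℂ) (ξ : ℝ) :
    HasDerivAt (fun ξ : ℝ => cexp (a * ξ ^ 3 + b * ξ))
      ((3 * a * ξ ^ 2 + b) * cexp (a * ξ ^ 3 + b * ξ)) ξ := by
  have h : HasDerivAt (fun y : ℝ => (y : ℂ)) 1 ξ := (hasDerivAt_id ξ).ofReal_comp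
  convert (((h.fun_pow 3).const_mul a).fun_add (h.const_mul b)).cexp using 1
  push_cast
  ring

open Complex in
theorem iteratedDeriv_two_cexp_cubic (a b : ℂ) (ξ : ℝ) :
    iteratedDeriv 2 (fun ξ : ℝ => cexp (a * ξ ^ 3 + b * ξ)) ξ =
      ((3 * a * ξ ^ 2 + b) ^ 2 + 6 * a * ξ) * cexp (a * ξ ^ 3 + b * ξ) := by
  have h : HasDerivAt (fun y : ℝ => (y : ℂ)) 1 ξ := (hasDerivAt_id ξ).ofReal_comp
  have := (((h.fun_pow 2).const_mul (3 * a)).add_const b).fun_mul (hasDerivAt_cexp_cubic a b ξ)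
  rw [iteratedDeriv_succ, iteratedDeriv_one,
    funext fun ξ => (hasDerivAt_cexp_cubic a b ξ).deriv, this.deriv]
  push_cast
  ring

open Complex in
theorem norm_cubic_factor_le (a b : ℂ) (ξ : ℝ) :
    ‖(3 * a * ξ ^ 2 + b) ^ 2 + 6 * a * ξ‖ ≤ (3 * ‖a‖ * ξ ^ 2 + ‖b‖) ^ 2 + 6 * ‖a‖ * |ξ| := by
  calc ‖(3 * a * ξ ^ 2 + b) ^ 2 + 6 * a * ξ‖
      ≤ ‖3 * a * ξ ^ 2 + b‖ ^ 2 + ‖6 * a * ξ‖ := (norm_add_le _ _).trans_eq (by rw [norm_pow])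
    _ ≤ (‖3 * a * ξ ^ 2‖ + ‖b‖) ^ 2 + ‖6 * a * ξ‖ := by gcongr; exact norm_add_le _ _
    _ = (3 * ‖a‖ * ξ ^ 2 + ‖b‖) ^ 2 + 6 * ‖a‖ * |ξ| := by simp

open Complex in
theorem norm_ostSymbol (η t ξ : ℝ) :
    ‖ostSymbol η t ξ‖ = rexp (-(η * t * (|ξ| ^ 3 - |ξ|))) := by
  simp only [ostSymbol, Complex.norm_exp, sub_re, mul_re, I_re, I_im, ofReal_re, ofReal_im]
  ring_nf

open Complex in
theorem ostSymbol_eq_cexp_cubic (η t : ℝ) {σ ξ : ℝ} (hσ : |σ| = 1) (hξ : |ξ| = σ * ξ) :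
    ostSymbol η t ξ =
      cexp ((I * t - (σ * (η * t) : ℝ)) * ξ ^ 3 + (σ * (η * t) : ℝ) * ξ) := by
  have hσ' : (σ : ℂ) ^ 2 = 1 := by exact_mod_cast (sq_abs σ).symm.trans (by rw [hσ, one_pow])
  rw [ostSymbol, hξ]
  push_cast
  congr 1
  linear_combination (-(η * t * σ * ξ ^ 3 : ℂ)) * hσ'

open Complex Filter Topology in
theorem iteratedDeriv_two_ostSymbol (η t : ℝ) {ξ : ℝ} (hξ : ξ ≠ 0) :
    ∃ σ : ℝ, |σ| = 1 ∧ iteratedDeriv 2 (fun ξ : ℝ => ostSymbol η t ξ) ξ =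
      ((3 * (I * t - (σ * (η * t) : ℝ)) * ξ ^ 2 + (σ * (η * t) : ℝ)) ^ 2
        + 6 * (I * t - (σ * (η * t) : ℝ)) * ξ) * ostSymbol η t ξ := by
  obtain ⟨σ, hσ, hloc⟩ : ∃ σ : ℝ, |σ| = 1 ∧ ∀ᶠ ζ in 𝓝 ξ, |ζ| = σ * ζ := by
    rcases hξ.lt_or_gt with hneg | hpos
    · exact ⟨-1, by norm_num, eventually_of_mem (Iio_mem_nhds hneg) fun ζ hζ => by
        simp [abs_of_neg (mem_Iio.mp hζ)]⟩
    · exact ⟨1, by norm_num, eventually_of_mem (Ioi_mem_nhds hpos) fun ζ hζ => by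
        simp [abs_of_pos (mem_Ioi.mp hζ)]⟩
  refine ⟨σ, hσ, ?_⟩
  rw [EventuallyEq.iteratedDeriv_eq 2 (hloc.mono fun ζ hζ => ostSymbol_eq_cexp_cubic η t hσ hζ),
    iteratedDeriv_two_cexp_cubic, ← ostSymbol_eq_cexp_cubic η t hσ hloc.self_of_nhds]

noncomputable def ostMajorant (s r : ℝ) : ℝ :=
  (s ^ 2 * (3 * r ^ 2 + 1) ^ 2 + 6 * s * r) * rexp (-(s / 2) * r ^ 3)

theorem le_one_add_pow_three_div_two {r : ℝ} (hr : 0 ≤ r) : r ≤ 1 + r ^ 3 / 2 := by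
  nlinarith [mul_nonneg hr (sq_nonneg (r - 1)), sq_nonneg (r - 3 / 4)]

open Complex in
theorem norm_iteratedDeriv_two_ostSymbol_le {η t ξ : ℝ} (hη : 0 < η) (ht : 0 < t) (hξ : ξ ≠ 0) :
    ‖iteratedDeriv 2 (fun ξ : ℝ => ostSymbol η t ξ) ξ‖ ≤
      (1 / η + 2) ^ 2 * rexp (η * t) * ostMajorant (η * t) |ξ| := by
  obtain ⟨σ, hσ, hderiv⟩ := iteratedDeriv_two_ostSymbol η t hξ
  set s := η * t with hs_def
  set A := 1 / η + 2 with hA_def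
  set r := |ξ|
  have hs : 0 < s := mul_pos hη ht
  have hr : 0 ≤ r := abs_nonneg ξ
  have hA : 1 ≤ A := by linarith [one_div_pos.mpr hη]
  have hsA : s * A = t + 2 * s := by rw [hs_def, hA_def]; field_simp
  have hb : ‖((σ * s : ℝ) : ℂ)‖ = s := by
    rw [norm_real, Real.norm_eq_abs, abs_mul, hσ, abs_of_pos hs, one_mul]
  have ha : ‖I * t - (σ * s : ℝ)‖ ≤ s * A :=
    calc ‖I * t - (σ * s : ℝ)‖ ≤ ‖I * t‖ + ‖((σ * s : ℝ) : ℂ)‖ := norm_sub_le _ _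
      _ = t + s := by rw [hb, norm_mul, norm_I, norm_real, Real.norm_of_nonneg ht.le, one_mul]
      _ ≤ s * A := by linarith
  have hpoly : ‖(3 * (I * t - (σ * s : ℝ)) * ξ ^ 2 + (σ * s : ℝ)) ^ 2
      + 6 * (I * t - (σ * s : ℝ)) * ξ‖ ≤ A ^ 2 * (s ^ 2 * (3 * r ^ 2 + 1) ^ 2 + 6 * s * r) :=
    calc _ ≤ (3 * ‖I * t - (σ * s : ℝ)‖ * ξ ^ 2 + ‖((σ * s : ℝ) : ℂ)‖) ^ 2
            + 6 * ‖I * t - (σ * s : ℝ)‖ * r := norm_cubic_factor_le _ _ ξ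
      _ ≤ (3 * (s * A) * r ^ 2 + s * A) ^ 2 + 6 * (s * A) * r := by
          rw [hb, ← sq_abs ξ]; gcongr; nlinarith
      _ ≤ A ^ 2 * (s ^ 2 * (3 * r ^ 2 + 1) ^ 2 + 6 * s * r) := by
          nlinarith [mul_nonneg (mul_nonneg hs.le hr) (mul_nonneg (by linarith : (0:ℝ) ≤ A)
            (by linarith : (0:ℝ) ≤ A - 1))]
  have hexp : rexp (-(s * (r ^ 3 - r))) ≤ rexp s * rexp (-(s / 2) * r ^ 3) := by
    rw [← Real.exp_add, Real.exp_le_exp]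
    nlinarith [le_one_add_pow_three_div_two hr]
  rw [hderiv, norm_mul, norm_ostSymbol, ostMajorant]
  calc _ ≤ A ^ 2 * (s ^ 2 * (3 * r ^ 2 + 1) ^ 2 + 6 * s * r) *
        (rexp s * rexp (-(s / 2) * r ^ 3)) :=
        mul_le_mul hpoly hexp (by positivity) (by positivity)
    _ = _ := by ring

theorem integrableOn_pow_mul_exp_neg_mul_pow_three (m : ℕ) {b : ℝ} (hb : 0 < b) :
    IntegrableOn (fun r : ℝ => r ^ m * rexp (-b * r ^ 3)) (Ioi 0) := by
  simpa only [Real.rpow_natCast, Real.rpow_ofNat] using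
    integrableOn_rpow_mul_exp_neg_mul_rpow (s := m) (p := 3)
      (neg_one_lt_zero.trans_le m.cast_nonneg) (by norm_num) hb

theorem integral_pow_mul_exp_neg_mul_pow_three (m : ℕ) {b : ℝ} (hb : 0 < b) :
    ∫ r in Ioi (0 : ℝ), r ^ m * rexp (-b * r ^ 3) =
      b ^ (-((m : ℝ) + 1) / 3) * (1 / 3) * Gamma (((m : ℝ) + 1) / 3) := by
  simpa only [Real.rpow_natCast, Real.rpow_ofNat] using
    integral_rpow_mul_exp_neg_mul_rpow (q := m) (p := 3) (by norm_num)
      (neg_one_lt_zero.trans_le m.cast_nonneg) hb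

theorem rpow_le_exp_mul {s p : ℝ} (hs : 0 ≤ s) (hp : 0 ≤ p) : s ^ p ≤ rexp (p * s) := by
  rw [mul_comm, Real.exp_mul]
  exact Real.rpow_le_rpow hs (by linarith [Real.add_one_le_exp s]) hp

noncomputable def cubicMomentConst (m : ℕ) : ℝ :=
  2 ^ (((m : ℝ) + 1) / 3) * Gamma (((m : ℝ) + 1) / 3) / 3

theorem cubicMomentConst_pos (m : ℕ) : 0 < cubicMomentConst m := by
  have := Real.Gamma_pos_of_pos (by positivity : (0 : ℝ) < ((m : ℝ) + 1) / 3)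
  unfold cubicMomentConst; positivity

theorem pow_mul_integral_pow_mul_exp_neg_mul_pow_three_le {s : ℝ} (hs : 0 < s) {k m : ℕ}
    (hkm : m + 1 ≤ 3 * k) (hkm' : 3 * k ≤ m + 10) :
    s ^ k * ∫ r in Ioi (0 : ℝ), r ^ m * rexp (-(s / 2) * r ^ 3) ≤
      cubicMomentConst m * rexp (3 * s) := by
  set q : ℝ := ((m : ℝ) + 1) / 3 with hq
  have hp : 0 ≤ (k : ℝ) - q := by
    have : ((m + 1 : ℕ) : ℝ) ≤ ((3 * k : ℕ) : ℝ) := by exact_mod_cast hkm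
    push_cast at this; linarith [hq]
  have hp' : (k : ℝ) - q ≤ 3 := by
    have : ((3 * k : ℕ) : ℝ) ≤ ((m + 10 : ℕ) : ℝ) := by exact_mod_cast hkm'
    push_cast at this; linarith [hq]
  have hscale : s ^ k * (s / 2) ^ (-q) = 2 ^ q * s ^ ((k : ℝ) - q) := by
    rw [Real.div_rpow hs.le two_pos.le, Real.rpow_neg hs.le, Real.rpow_neg two_pos.le,
      Real.rpow_sub hs, Real.rpow_natCast]
    field_simp
  rw [integral_pow_mul_exp_neg_mul_pow_three m (half_pos hs), neg_div]
  calc s ^ k * ((s / 2) ^ (-q) * (1 / 3) * Gamma q)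
      = 2 ^ q * Gamma q / 3 * s ^ ((k : ℝ) - q) := by linear_combination (Gamma q / 3) * hscale
    _ ≤ cubicMomentConst m * rexp (3 * s) := by
      have := Real.Gamma_pos_of_pos (by positivity : 0 < q)
      unfold cubicMomentConst
      gcongr
      exact (rpow_le_exp_mul hs.le hp).trans
        (Real.exp_le_exp.mpr (mul_le_mul_of_nonneg_right hp' hs.le))

noncomputable def ostMajorantConst : ℝ :=
  9 * cubicMomentConst 4 + 6 * cubicMomentConst 2 + cubicMomentConst 0 + 6 * cubicMomentConst 1

theorem ostMajorantConst_pos : 0 < ostMajorantConst := by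
  have := cubicMomentConst_pos
  unfold ostMajorantConst
  linarith [this 0, this 1, this 2, this 4]

theorem ostMajorant_eq_sum (s r : ℝ) :
    ostMajorant s r = 9 * s ^ 2 * (r ^ 4 * rexp (-(s / 2) * r ^ 3))
      + 6 * s ^ 2 * (r ^ 2 * rexp (-(s / 2) * r ^ 3)) + s ^ 2 * (r ^ 0 * rexp (-(s / 2) * r ^ 3))
      + 6 * s ^ 1 * (r ^ 1 * rexp (-(s / 2) * r ^ 3)) := by
  rw [ostMajorant]; ring

theorem integrableOn_ostMajorant {s : ℝ} (hs : 0 < s) : IntegrableOn (ostMajorant s) (Ioi 0) := by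
  have hg := fun m => integrableOn_pow_mul_exp_neg_mul_pow_three m (half_pos hs)
  simp only [funext (ostMajorant_eq_sum s)]
  exact ((((hg 4).const_mul _).fun_add ((hg 2).const_mul _)).fun_add ((hg 0).const_mul _)).fun_add
    ((hg 1).const_mul _)

theorem integral_ostMajorant_le {s : ℝ} (hs : 0 < s) :
    ∫ r in Ioi 0, ostMajorant s r ≤ ostMajorantConst * rexp (3 * s) := by
  have hg := fun m => integrableOn_pow_mul_exp_neg_mul_pow_three m (half_pos hs)
  have hmom := @pow_mul_integral_pow_mul_exp_neg_mul_pow_three_le s hs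
  have h4 := hmom (k := 2) (m := 4) (by norm_num) (by norm_num)
  have h2 := hmom (k := 2) (m := 2) (by norm_num) (by norm_num)
  have h0 := hmom (k := 2) (m := 0) (by norm_num) (by norm_num)
  have h1 := hmom (k := 1) (m := 1) (by norm_num) (by norm_num)
  simp only [ostMajorant_eq_sum]
  rw [integral_add
      ((((hg 4).const_mul _).fun_add ((hg 2).const_mul _)).fun_add ((hg 0).const_mul _))
      ((hg 1).const_mul _),
    integral_add (((hg 4).const_mul _).fun_add ((hg 2).const_mul _)) ((hg 0).const_mul _),
    integral_add ((hg 4).const_mul _) ((hg 2).const_mul _)]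
  simp only [integral_const_mul, ostMajorantConst]
  linarith

theorem integrable_comp_abs_of_integrableOn_Ioi {E : Type*} [NormedAddCommGroup E] {f : ℝ → E}
    (hf : IntegrableOn f (Ioi 0)) : Integrable (fun x => f |x|) := by
  have hIio : IntegrableOn (fun x => f |x|) (Iio 0) :=
    (IntegrableOn.comp_neg_Iio (c := 0) (by rwa [neg_zero])).congr_fun
      (fun x hx => by rw [abs_of_neg hx]) measurableSet_Iio
  have hIci : IntegrableOn (fun x => f |x|) (Ici 0) :=
    Iff.mpr integrableOn_Ici_iff_integrableOn_Ioi
      (hf.congr_fun (fun x hx => by rw [abs_of_pos (mem_Ioi.mp hx)]) measurableSet_Ioi)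
  simpa only [Iio_union_Ici, integrableOn_univ] using hIio.union hIci

theorem setIntegral_norm_iteratedDeriv_two_ostSymbol_le {η t : ℝ} (hη : 0 < η) (ht : 0 < t)
    (S : Set ℝ) :
    ∫ ξ in S, ‖iteratedDeriv 2 (fun ξ : ℝ => ostSymbol η t ξ) ξ‖ ≤
      2 * ostMajorantConst * (1 / η + 2) ^ 2 * rexp (4 * η * t) := by
  have hs : 0 < η * t := mul_pos hη ht
  set F : ℝ → ℝ := fun ξ => (1 / η + 2) ^ 2 * rexp (η * t) * ostMajorant (η * t) |ξ|
  have hF_int : Integrable F :=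
    (integrable_comp_abs_of_integrableOn_Ioi (integrableOn_ostMajorant hs)).const_mul _
  have hF_nonneg : 0 ≤ F := fun ξ => by simp only [F, ostMajorant]; positivity
  calc ∫ ξ in S, ‖iteratedDeriv 2 (fun ξ : ℝ => ostSymbol η t ξ) ξ‖
      ≤ ∫ ξ in S, F ξ := integral_mono_of_nonneg (ae_of_all _ fun _ => norm_nonneg _)
        hF_int.integrableOn (ae_restrict_of_ae ((volume.ae_ne 0).mono fun _ hξ =>
          norm_iteratedDeriv_two_ostSymbol_le hη ht hξ))
    _ ≤ ∫ ξ, F ξ := setIntegral_le_integral hF_int (ae_of_all _ hF_nonneg)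
    _ = (1 / η + 2) ^ 2 * rexp (η * t) * (2 * ∫ r in Ioi 0, ostMajorant (η * t) r) := by
        rw [integral_const_mul, integral_comp_abs]
    _ ≤ (1 / η + 2) ^ 2 * rexp (η * t) * (2 * (ostMajorantConst * rexp (3 * (η * t)))) := by
        gcongr; exact integral_ostMajorant_le hs
    _ = 2 * ostMajorantConst * (1 / η + 2) ^ 2 * rexp (4 * η * t) := by
        rw [show 4 * η * t = η * t + 3 * (η * t) by ring, Real.exp_add]; ring

open Complex in
theorem norm_setIntegral_cexp_mul_le (x : ℝ) (S : Set ℝ) (g : ℝ → ℂ) :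
    ‖∫ ξ in S, cexp (2 * π * I * ((x * ξ : ℝ) : ℂ)) * g ξ‖ ≤ ∫ ξ in S, ‖g ξ‖ := by
  have hunit : ∀ ξ : ℝ, ‖cexp (2 * π * I * ((x * ξ : ℝ) : ℂ))‖ = 1 := fun ξ => by
    rw [show 2 * π * I * ((x * ξ : ℝ) : ℂ) = ((2 * π * (x * ξ) : ℝ) : ℂ) * I by push_cast; ring]
    exact norm_exp_ofReal_mul_I _
  simpa only [norm_mul, hunit, one_mul] using
    norm_integral_le_integral_norm fun ξ => cexp (2 * π * I * ((x * ξ : ℝ) : ℂ)) * g ξ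

theorem stmt19 : ∃ c > (0:ℝ), ∀ η t : ℝ, 0 < η → 0 < t →
    (∀ x : ℝ,
      ‖(∫ ξ in Set.Iio (0:ℝ), Complex.exp (2 * Real.pi * Complex.I * ((x * ξ : ℝ) : ℂ)) *
            iteratedDeriv 2 (fun ξ : ℝ => ostSymbol η t ξ) ξ) +
        ∫ ξ in Set.Ioi (0:ℝ), Complex.exp (2 * Real.pi * Complex.I * ((x * ξ : ℝ) : ℂ)) *
            iteratedDeriv 2 (fun ξ : ℝ => ostSymbol η t ξ) ξ‖ ≤
        c * (1/η + 2) ^ 2 * Real.exp (4 * η * t)) ∧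
    (∫ ξ in Set.Iio (0:ℝ), ‖iteratedDeriv 2 (fun ξ : ℝ => ostSymbol η t ξ) ξ‖) ≤
      c * (1/η + 2) ^ 2 * Real.exp (4 * η * t) := by
  have hC := ostMajorantConst_pos
  refine ⟨4 * ostMajorantConst, by positivity, fun η t hη ht => ⟨fun x => ?_, ?_⟩⟩
  · have hIio := setIntegral_norm_iteratedDeriv_two_ostSymbol_le hη ht (Iio 0)
    have hIoi := setIntegral_norm_iteratedDeriv_two_ostSymbol_le hη ht (Ioi 0)
    refine (norm_add_le _ _).trans ?_
    linarith [norm_setIntegral_cexp_mul_le x (Iio 0) (iteratedDeriv 2 fun ξ => ostSymbol η t ξ),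
      norm_setIntegral_cexp_mul_le x (Ioi 0) (iteratedDeriv 2 fun ξ => ostSymbol η t ξ)]
  · refine (setIntegral_norm_iteratedDeriv_two_ostSymbol_le hη ht (Iio 0)).trans ?_
    have : 0 ≤ ostMajorantConst * (1 / η + 2) ^ 2 * rexp (4 * η * t) := by positivity
    linarith
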